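/- arXiv:1805.01673 — 8 statements merged into one kernel-verified Lean document; each statement's English description precedes it below -/
import Mathlib

section
/- Let V₁ and V₂ be linear subspaces of ℝˡ (with its standard inner product) with dim V₁ = dim V₂ = q. Then there exist orthonormal bases a₁,…,a_q of V₁ and b₁,…,b_q of V₂ such that ⟨aᵢ, bⱼ⟩ = 0 whenever i ≠ j. -/
open scoped InnerProductSpace

/-! Let `T : V₁ → V₂` be the orthogonal projection onto `V₂` restricted to `V₁`, so that
`⟪a, b⟫ = ⟪T a, b⟫` for `a ∈ V₁`, `b ∈ V₂`. An orthonormal eigenbasis `aᵢ` of the symmetric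
operator `T†T` has pairwise orthogonal images `T aᵢ`; normalising the nonzero ones and completing
them to an orthonormal basis `bⱼ` of `V₂` gives `⟪T aᵢ, bⱼ⟫ = 0` for `i ≠ j` (a singular value
decomposition of `T`). -/

open Module

variable {𝕜 E F ι : Type*} [RCLike 𝕜] [Fintype ι]
  [NormedAddCommGroup E] [InnerProductSpace 𝕜 E]
  [NormedAddCommGroup F] [InnerProductSpace 𝕜 F]

theorem OrthonormalBasis.span_range_coe {V : Submodule 𝕜 E} (b : OrthonormalBasis ι 𝕜 V) :
    Submodule.span 𝕜 (Set.range fun i => (b i : E)) = V := by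
  rw [show (fun i => (b i : E)) = V.subtype ∘ b from rfl, Set.range_comp, Submodule.span_image,
    ← b.coe_toBasis, b.toBasis.span_eq, Submodule.map_top, Submodule.range_subtype]

theorem exists_orthonormalBasis_inner_eq_zero_of_pairwise [FiniteDimensional 𝕜 F]
    (hcard : finrank 𝕜 F = Fintype.card ι) {w : ι → F}
    (hw : Pairwise fun i j => ⟪w i, w j⟫_𝕜 = 0) :
    ∃ f : OrthonormalBasis ι 𝕜 F, ∀ i j, i ≠ j → ⟪w i, f j⟫_𝕜 = 0 := by
  set s : Set ι := {i | w i ≠ 0}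
  set v : ι → F := fun i => (‖w i‖⁻¹ : 𝕜) • w i
  have hv : Orthonormal 𝕜 (s.domRestrict v) := by
    refine ⟨fun i => norm_smul_inv_norm i.2, fun i j hij => ?_⟩
    change ⟪v i, v j⟫_𝕜 = 0
    simp only [v, inner_smul_left, inner_smul_right, hw (Subtype.coe_ne_coe.mpr hij), mul_zero]
  obtain ⟨f, hf⟩ := hv.exists_orthonormalBasis_extension_of_card_eq hcard
  refine ⟨f, fun i j hij => ?_⟩
  by_cases hi : w i = 0
  · rw [hi, inner_zero_left]
  · have hwi : w i = (‖w i‖ : 𝕜) • f i := by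
      rw [hf i hi, smul_smul, mul_inv_cancel₀ (by simpa using hi), one_smul]
    rw [hwi, inner_smul_left, f.orthonormal.2 hij, mul_zero]

namespace LinearMap

variable [FiniteDimensional 𝕜 E] [FiniteDimensional 𝕜 F]

theorem inner_apply_eigenvectorBasis_adjoint_comp_self (T : E →ₗ[𝕜] F) {n : ℕ}
    (hn : finrank 𝕜 E = n) {i j : Fin n} (hij : i ≠ j) :
    ⟪T (T.isSymmetric_adjoint_comp_self.eigenvectorBasis hn i),
      T (T.isSymmetric_adjoint_comp_self.eigenvectorBasis hn j)⟫_𝕜 = 0 := by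
  rw [← adjoint_inner_right, ← comp_apply, IsSymmetric.apply_eigenvectorBasis, inner_smul_right,
    (OrthonormalBasis.orthonormal _).2 hij, mul_zero]

theorem exists_orthonormalBasis_inner_apply_eq_zero (T : E →ₗ[𝕜] F) {n : ℕ}
    (hE : finrank 𝕜 E = n) (hF : finrank 𝕜 F = n) :
    ∃ (e : OrthonormalBasis (Fin n) 𝕜 E) (f : OrthonormalBasis (Fin n) 𝕜 F),
      ∀ i j, i ≠ j → ⟪T (e i), f j⟫_𝕜 = 0 := by
  obtain ⟨f, hf⟩ := exists_orthonormalBasis_inner_eq_zero_of_pairwise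
    (hF.trans (Fintype.card_fin n).symm) fun i j hij =>
      T.inner_apply_eigenvectorBasis_adjoint_comp_self hE hij
  exact ⟨_, f, hf⟩

end LinearMap

/-- Let `V₁`, `V₂` be linear subspaces of `ℝˡ` with `dim V₁ = dim V₂ = q`.
Then there exist orthonormal bases `a₁,…,a_q` of `V₁` and `b₁,…,b_q` of `V₂`
such that `⟨aᵢ, bⱼ⟩ = 0` whenever `i ≠ j`. -/
theorem stmt_0 (l q : ℕ) (V₁ V₂ : Submodule ℝ (EuclideanSpace ℝ (Fin l)))
    (h₁ : Module.finrank ℝ V₁ = q) (h₂ : Module.finrank ℝ V₂ = q) :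
    ∃ a b : Fin q → EuclideanSpace ℝ (Fin l),
      (∀ i, a i ∈ V₁) ∧ (∀ i, b i ∈ V₂) ∧
      Orthonormal ℝ a ∧ Orthonormal ℝ b ∧
      Submodule.span ℝ (Set.range a) = V₁ ∧
      Submodule.span ℝ (Set.range b) = V₂ ∧
      (∀ i j : Fin q, i ≠ j → ⟪a i, b j⟫_ℝ = 0) := by
  obtain ⟨e, f, hef⟩ := (V₂.orthogonalProjectionOnto.toLinearMap ∘ₗ V₁.subtype)
    |>.exists_orthonormalBasis_inner_apply_eq_zero h₁ h₂
  refine ⟨fun i => e i, fun i => f i, fun i => (e i).2, fun i => (f i).2,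
    e.orthonormal.comp_linearIsometry V₁.subtypeₗᵢ, f.orthonormal.comp_linearIsometry V₂.subtypeₗᵢ,
    e.span_range_coe, f.span_range_coe, fun i j hij => ?_⟩
  rw [← V₂.inner_orthogonalProjectionOnto_eq_of_mem_right]
  exact hef i j hij
end

section
/- Let R : ℝ → (ℝⁿ →L[ℝ] ℝⁿ) be continuous and y : ℝ → ℝⁿ twice differentiable with y''(t) + R(t) y(t) = 0. Then the function V² := ‖y‖²·‖y'‖² − ⟨y, y'⟩² is differentiable and satisfies (V²)'(t) = −2·( ⟨R(t) y(t), y'(t)⟩·‖y(t)‖² − ⟨R(t) y(t), y(t)⟩·⟨y(t), y'(t)⟩ ) for every t. -/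
/-!
The `‖y'‖²` contributions to the derivative of the Gram determinant `‖y‖²‖y'‖² − ⟨y, y'⟩²`
cancel, leaving `2(‖y‖²⟨y', y''⟩ − ⟨y, y'⟩⟨y, y''⟩)`; the Jacobi equation then replaces `y''`
by `−R y`.
-/

open scoped InnerProductSpace

section GramDeterminant

variable {E : Type*} [NormedAddCommGroup E] [InnerProductSpace ℝ E]

theorem HasDerivAt.norm_sq_mul_norm_sq_sub_inner_sq {f g : ℝ → E} {f' g' : E} {t : ℝ}
    (hf : HasDerivAt f f' t) (hg : HasDerivAt g g' t) :
    HasDerivAt (fun s => ‖f s‖ ^ 2 * ‖g s‖ ^ 2 - ⟪f s, g s⟫_ℝ ^ 2)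
      (2 * ⟪f t, f'⟫_ℝ * ‖g t‖ ^ 2 + ‖f t‖ ^ 2 * (2 * ⟪g t, g'⟫_ℝ)
        - 2 * ⟪f t, g t⟫_ℝ * (⟪f t, g'⟫_ℝ + ⟪f', g t⟫_ℝ)) t := by
  simpa using (hf.norm_sq.fun_mul hg.norm_sq).fun_sub ((hf.inner ℝ hg).fun_pow 2)

theorem HasDerivAt.norm_sq_mul_norm_sq_deriv_sub_inner_sq {f f' : ℝ → E} {f'' : E} {t : ℝ}
    (hf : HasDerivAt f (f' t) t) (hf' : HasDerivAt f' f'' t) :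
    HasDerivAt (fun s => ‖f s‖ ^ 2 * ‖f' s‖ ^ 2 - ⟪f s, f' s⟫_ℝ ^ 2)
      (2 * (‖f t‖ ^ 2 * ⟪f' t, f''⟫_ℝ - ⟪f t, f' t⟫_ℝ * ⟪f t, f''⟫_ℝ)) t := by
  refine (hf.norm_sq_mul_norm_sq_sub_inner_sq hf').congr_deriv ?_
  rw [real_inner_self_eq_norm_sq]
  ring

end GramDeterminant

theorem stmt_4_general {n : ℕ}
    (R : ℝ → EuclideanSpace ℝ (Fin n) →L[ℝ] EuclideanSpace ℝ (Fin n))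
    (y y' y'' : ℝ → EuclideanSpace ℝ (Fin n))
    (hy : ∀ t, HasDerivAt y (y' t) t) (hy' : ∀ t, HasDerivAt y' (y'' t) t)
    (hode : ∀ t, y'' t + R t (y t) = 0) :
    ∀ t, HasDerivAt (fun s => ‖y s‖ ^ 2 * ‖y' s‖ ^ 2 - ⟪y s, y' s⟫_ℝ ^ 2)
      (-2 * (⟪R t (y t), y' t⟫_ℝ * ‖y t‖ ^ 2 - ⟪R t (y t), y t⟫_ℝ * ⟪y t, y' t⟫_ℝ)) t := by
  intro t
  have hy'' : y'' t = -R t (y t) := eq_neg_of_add_eq_zero_left (hode t)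
  refine ((hy t).norm_sq_mul_norm_sq_deriv_sub_inner_sq (hy' t)).congr_deriv ?_
  rw [hy'', inner_neg_right, inner_neg_right, real_inner_comm (R t (y t)) (y' t),
    real_inner_comm (R t (y t)) (y t)]
  ring

/-- For a solution of the Jacobi ODE `y'' + R(t) y = 0`, the function
`V² = ‖y‖²·‖y'‖² − ⟨y, y'⟩²` is differentiable with
`(V²)'(t) = −2·(⟨R(t)y, y'⟩·‖y‖² − ⟨R(t)y, y⟩·⟨y, y'⟩)`. -/
theorem stmt_4 {n : ℕ}
    (R : ℝ → EuclideanSpace ℝ (Fin n) →L[ℝ] EuclideanSpace ℝ (Fin n))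
    (hRcont : Continuous R)
    (y y' y'' : ℝ → EuclideanSpace ℝ (Fin n))
    (hy : ∀ t, HasDerivAt y (y' t) t) (hy' : ∀ t, HasDerivAt y' (y'' t) t)
    (hode : ∀ t, y'' t + R t (y t) = 0) :
    ∀ t, HasDerivAt (fun s => ‖y s‖ ^ 2 * ‖y' s‖ ^ 2 - ⟪y s, y' s⟫_ℝ ^ 2)
      (-2 * (⟪R t (y t), y' t⟫_ℝ * ‖y t‖ ^ 2 - ⟪R t (y t), y t⟫_ℝ * ⟪y t, y' t⟫_ℝ)) t :=
  stmt_4_general R y y' y'' hy hy' hode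
end

section
/- Let k ∈ ℝ, ε₁ ≥ 0, let R : ℝ → (ℝⁿ →L[ℝ] ℝⁿ) be continuous with ‖R(t) − k·id‖ ≤ ε₁ for all t, and let y : ℝ → ℝⁿ be twice differentiable with y''(t) + R(t) y(t) = 0. Set V(t) = √(‖y(t)‖²·‖y'(t)‖² − ⟨y(t), y'(t)⟩²). Then at every t with V(t) > 0, the function V is differentiable and |V'(t)| ≤ ε₁·‖y(t)‖². -/
/-!
Write `W = ‖y‖²‖y'‖² - ⟪y, y'⟫²` and `u = ‖y‖² y' - ⟪y, y'⟫ y`. Differentiating gives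
`W' = 2⟪u, y''⟫`, and since `u ⊥ y` we may replace `y''` by `y'' + k y = -(R - k·id) y`,
whose norm is at most `ε₁ ‖y‖`. As `‖u‖² = ‖y‖² W`, Cauchy–Schwarz yields
`|W'| ≤ 2 ε₁ ‖y‖² √W`, i.e. `|(√W)'| ≤ ε₁ ‖y‖²`.
-/

open scoped InnerProductSpace
open Real

section Gram

variable {E : Type*} [NormedAddCommGroup E] [InnerProductSpace ℝ E]

def gram (x v : E) : ℝ := ‖x‖ ^ 2 * ‖v‖ ^ 2 - ⟪x, v⟫_ℝ ^ 2

/-- `‖x‖²` times the component of `v` orthogonal to `x`. -/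
def scaledRejection (x v : E) : E := ‖x‖ ^ 2 • v - ⟪x, v⟫_ℝ • x

theorem inner_scaledRejection_self (x v : E) : ⟪scaledRejection x v, x⟫_ℝ = 0 := by
  rw [scaledRejection, inner_sub_left, real_inner_smul_left, real_inner_smul_left,
    real_inner_self_eq_norm_sq, real_inner_comm]
  ring

theorem norm_scaledRejection_sq (x v : E) :
    ‖scaledRejection x v‖ ^ 2 = ‖x‖ ^ 2 * gram x v := by
  rw [← real_inner_self_eq_norm_sq, scaledRejection, gram]
  simp only [inner_sub_left, inner_sub_right, real_inner_smul_left, real_inner_smul_right]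
  simp only [real_inner_self_eq_norm_sq, real_inner_comm x v]
  ring

theorem norm_scaledRejection (x v : E) :
    ‖scaledRejection x v‖ = ‖x‖ * √(gram x v) := by
  rw [← sqrt_sq (norm_nonneg _), norm_scaledRejection_sq, sqrt_mul (sq_nonneg _),
    sqrt_sq (norm_nonneg _)]

theorem abs_inner_scaledRejection_le (x v a : E) (k : ℝ) :
    |⟪scaledRejection x v, a⟫_ℝ| ≤ ‖x‖ * √(gram x v) * ‖a + k • x‖ := by
  have hshift : ⟪scaledRejection x v, a⟫_ℝ = ⟪scaledRejection x v, a + k • x⟫_ℝ := by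
    rw [inner_add_right, real_inner_smul_right, inner_scaledRejection_self]
    ring
  rw [hshift, ← norm_scaledRejection]
  exact abs_real_inner_le_norm _ _

theorem abs_inner_scaledRejection_div_le (x v a : E) (k : ℝ) :
    |⟪scaledRejection x v, a⟫_ℝ / √(gram x v)| ≤ ‖x‖ * ‖a + k • x‖ := by
  rcases (sqrt_nonneg (gram x v)).eq_or_lt with hzero | hpos
  · rw [← hzero, div_zero, abs_zero]
    positivity
  · rw [abs_div, abs_of_pos hpos, div_le_iff₀ hpos]
    linarith [abs_inner_scaledRejection_le x v a k]

theorem hasDerivAt_gram {y y' : ℝ → E} {t : ℝ} {a : E}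
    (hy : HasDerivAt y (y' t) t) (hy' : HasDerivAt y' a t) :
    HasDerivAt (fun s => gram (y s) (y' s)) (2 * ⟪scaledRejection (y t) (y' t), a⟫_ℝ) t := by
  have hyy := hy.inner ℝ hy
  have hy'y' := hy'.inner ℝ hy'
  have hyy' := hy.inner ℝ hy'
  simp only [real_inner_self_eq_norm_sq] at hyy hy'y' hyy'
  refine ((hyy.mul hy'y').sub (hyy'.pow 2)).congr_deriv ?_
  simp only [scaledRejection, inner_sub_left, real_inner_smul_left,
    real_inner_comm (y' t) (y t), real_inner_comm a (y' t), Nat.cast_ofNat]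
  ring

theorem hasDerivAt_sqrt_gram {y y' : ℝ → E} {t : ℝ} {a : E}
    (hy : HasDerivAt y (y' t) t) (hy' : HasDerivAt y' a t) (hpos : 0 < gram (y t) (y' t)) :
    HasDerivAt (fun s => √(gram (y s) (y' s)))
      (⟪scaledRejection (y t) (y' t), a⟫_ℝ / √(gram (y t) (y' t))) t := by
  convert (hasDerivAt_gram hy hy').sqrt hpos.ne' using 1
  field_simp

end Gram

theorem stmt_5_general {n : ℕ} (k ε₁ : ℝ)
    (R : ℝ → EuclideanSpace ℝ (Fin n) →L[ℝ] EuclideanSpace ℝ (Fin n))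
    (hR : ∀ t, ‖R t - k • ContinuousLinearMap.id ℝ (EuclideanSpace ℝ (Fin n))‖ ≤ ε₁)
    (y y' y'' : ℝ → EuclideanSpace ℝ (Fin n))
    (hy : ∀ t, HasDerivAt y (y' t) t) (hy' : ∀ t, HasDerivAt y' (y'' t) t)
    (hode : ∀ t, y'' t + R t (y t) = 0)
    (V : ℝ → ℝ)
    (hV : ∀ t, V t = Real.sqrt (‖y t‖ ^ 2 * ‖y' t‖ ^ 2 - ⟪y t, y' t⟫_ℝ ^ 2)) :
    ∀ t, 0 < V t → ∃ d : ℝ, HasDerivAt V d t ∧ |d| ≤ ε₁ * ‖y t‖ ^ 2 := by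
  intro t ht
  have hVgram : V = fun s => √(gram (y s) (y' s)) := funext hV
  have hpos : 0 < gram (y t) (y' t) := sqrt_pos.mp (hV t ▸ ht)
  refine ⟨_, hVgram ▸ hasDerivAt_sqrt_gram (hy t) (hy' t) hpos, ?_⟩
  have hperturb : y'' t + k • y t
      = -((R t - k • ContinuousLinearMap.id ℝ (EuclideanSpace ℝ (Fin n))) (y t)) := by
    rw [eq_neg_of_add_eq_zero_left (hode t)]
    simp only [sub_apply, smul_apply, ContinuousLinearMap.id_apply]
    abel
  calc _ ≤ ‖y t‖ * ‖y'' t + k • y t‖ := abs_inner_scaledRejection_div_le _ _ _ k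
    _ ≤ ‖y t‖ * (ε₁ * ‖y t‖) := by
      rw [hperturb, norm_neg]
      gcongr
      exact (ContinuousLinearMap.le_opNorm _ _).trans
        (mul_le_mul_of_nonneg_right (hR t) (norm_nonneg _))
    _ = ε₁ * ‖y t‖ ^ 2 := by ring

/-- If `‖R(t) − k·id‖ ≤ ε₁` and `y'' + R(t) y = 0`, then at every `t` with `V(t) > 0`
the parallelogram area `V(t) = √(‖y‖²·‖y'‖² − ⟨y, y'⟩²)` is differentiable and
`|V'(t)| ≤ ε₁·‖y(t)‖²`. -/
theorem stmt_5 {n : ℕ} (k ε₁ : ℝ) (hε₁ : 0 ≤ ε₁)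
    (R : ℝ → EuclideanSpace ℝ (Fin n) →L[ℝ] EuclideanSpace ℝ (Fin n))
    (hRcont : Continuous R)
    (hR : ∀ t, ‖R t - k • ContinuousLinearMap.id ℝ (EuclideanSpace ℝ (Fin n))‖ ≤ ε₁)
    (y y' y'' : ℝ → EuclideanSpace ℝ (Fin n))
    (hy : ∀ t, HasDerivAt y (y' t) t) (hy' : ∀ t, HasDerivAt y' (y'' t) t)
    (hode : ∀ t, y'' t + R t (y t) = 0)
    (V : ℝ → ℝ)
    (hV : ∀ t, V t = Real.sqrt (‖y t‖ ^ 2 * ‖y' t‖ ^ 2 - ⟪y t, y' t⟫_ℝ ^ 2)) :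
    ∀ t, 0 < V t → ∃ d : ℝ, HasDerivAt V d t ∧ |d| ≤ ε₁ * ‖y t‖ ^ 2 :=
  stmt_5_general k ε₁ R hR y y' y'' hy hy' hode V hV
end

section
/- For every τ ∈ [0.5, π/2], one has 2·sin τ / (π/4 + (1/2)·(π/2 − τ)·cos τ + 4·sin τ) ≥ 0.3. -/
open Real

lemma sin_half_lb : Real.sin 0.5 ≥ 0.4759 := by
  have h := abs_sub_le_iff.1 (Real.sin_bound (x := 0.5) (by norm_num [abs_of_nonneg]))
  have := h.2
  rw [abs_of_nonneg (by norm_num : (0:ℝ) ≤ 0.5)] at this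
  norm_num at this ⊢
  linarith

lemma cos_half_ub : Real.cos 0.5 ≤ 0.8783 := by
  have h := abs_sub_le_iff.1 (Real.cos_bound (x := 0.5) (by norm_num [abs_of_nonneg]))
  have := h.1
  rw [abs_of_nonneg (by norm_num : (0:ℝ) ≤ 0.5)] at this
  norm_num at this ⊢
  linarith

/-- For every `τ ∈ [0.5, π/2]`:
`2 sin τ / (π/4 + (1/2)(π/2 − τ)cos τ + 4 sin τ) ≥ 0.3`. -/
theorem stmt_10 (τ : ℝ) (h0 : (0.5 : ℝ) ≤ τ) (h1 : τ ≤ π / 2) :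
    2 * Real.sin τ / (π / 4 + 1 / 2 * (π / 2 - τ) * Real.cos τ + 4 * Real.sin τ)
      ≥ (0.3 : ℝ) := by
  have hπl : (3.1415 : ℝ) < π := by linarith [Real.pi_gt_d6]
  have hπu : π < 3.1416 := by linarith [Real.pi_lt_d2, Real.pi_lt_d6]
  have hτ0 : (0:ℝ) ≤ τ := by linarith
  have hcos0 : 0 ≤ Real.cos τ := Real.cos_nonneg_of_mem_Icc ⟨by linarith, h1⟩
  have hsinmono : Real.sin 0.5 ≤ Real.sin τ :=
    Real.sin_le_sin_of_le_of_le_pi_div_two (by linarith) h1 h0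
  have hcosmono : Real.cos τ ≤ Real.cos 0.5 :=
    Real.cos_le_cos_of_nonneg_of_le_pi (by norm_num) (by linarith) h0
  have hsin0 : (0.4759:ℝ) ≤ Real.sin τ := le_trans sin_half_lb hsinmono
  have hcosub : Real.cos τ ≤ 0.8783 := le_trans hcosmono cos_half_ub
  have hgap : 0 ≤ π / 2 - τ := by linarith
  have hD : 0 < π / 4 + 1 / 2 * (π / 2 - τ) * Real.cos τ + 4 * Real.sin τ := by
    have : 0 ≤ 1 / 2 * (π / 2 - τ) * Real.cos τ := by positivity
    nlinarith
  rw [ge_iff_le, le_div_iff₀ hD]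
  have hprod : (π / 2 - τ) * Real.cos τ ≤ (3.1416 / 2 - 0.5) * 0.8783 := by
    have h1' : (π / 2 - τ) * Real.cos τ ≤ (3.1416 / 2 - 0.5) * Real.cos τ := by
      apply mul_le_mul_of_nonneg_right _ hcos0; linarith
    have h2' : (3.1416 / 2 - 0.5) * Real.cos τ ≤ (3.1416 / 2 - 0.5) * 0.8783 := by
      apply mul_le_mul_of_nonneg_left hcosub; norm_num
    linarith
  nlinarith
end

section
/- Let T > 0, k ∈ ℝ, let g : ℝ → ℝ be continuous, and let B : ℝ → (ℝⁿ →L[ℝ] ℝⁿ) be differentiable and satisfy the matrix Riccati equation B'(t) + B(t)² + 2g(t)·B(t) + k·id = 0 for all t ∈ [0, T]. If B(0) y₀ = λ₀·y₀ for some nonzero vector y₀ ∈ ℝⁿ and some real number λ₀, then there exists a differentiable function λ : [0, T] → ℝ with λ(0) = λ₀ such that B(t) y₀ = λ(t)·y₀ for all t ∈ [0, T] and λ'(t) + λ(t)² + 2g(t)·λ(t) + k = 0 on [0, T]; in particular, every eigenvector of B(0) remains an eigenvector of B(t) for all t. -/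
/-!
Write `P` for the orthogonal projection onto `y₀ᗮ` and `λ(t)` for the Rayleigh quotient of
`B(t)` at `y₀`, so that `B(t) y₀ = P (B(t) y₀) + λ(t) y₀`. Applying the Riccati equation to `y₀`
and projecting shows that `u(t) = P (B(t) y₀)` solves the linear equation
`u' = -(P B(t) + (λ(t) + 2 g(t))) u` with `u(0) = 0`, hence vanishes by Grönwall. Then `y₀` is an
eigenvector of every `B(t)` with eigenvalue `λ(t)`, and the Riccati equation applied to `y₀` is the
scalar Riccati equation for `λ`.
-/

open Set

theorem eqOn_zero_of_hasDerivWithinAt_clm_apply {E : Type*} [NormedAddCommGroup E]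
    [NormedSpace ℝ E] {A : ℝ → E →L[ℝ] E} {u : ℝ → E} {a b : ℝ}
    (hA : ContinuousOn A (Icc a b)) (hu : ContinuousOn u (Icc a b))
    (hu' : ∀ t ∈ Ico a b, HasDerivWithinAt u (A t (u t)) (Ici t) t) (ha : u a = 0) :
    ∀ t ∈ Icc a b, u t = 0 := by
  obtain ⟨C, hC⟩ := isCompact_Icc.exists_bound_of_continuousOn hA
  refine eq_zero_of_abs_deriv_le_mul_abs_self_of_eq_zero_right (K := C) hu hu' ha fun t ht => ?_
  exact (A t).le_opNorm_of_le le_rfl |>.trans (by gcongr; exact hC t (Ico_subset_Icc_self ht))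

section InnerProductSpace

variable {E : Type*} [NormedAddCommGroup E] [InnerProductSpace ℝ E]

theorem Submodule.starProjection_orthogonal_span_singleton_self (x : E) :
    (ℝ ∙ x)ᗮ.starProjection x = 0 :=
  (starProjection_apply_eq_zero_iff _).2 <| le_orthogonal_orthogonal _ <| mem_span_singleton_self x

namespace ContinuousLinearMap

theorem rayleighQuotient_eq_of_apply_eq_smul {T : E →L[ℝ] E} {x : E} {μ : ℝ}
    (hx : x ≠ 0) (hTx : T x = μ • x) : T.rayleighQuotient x = μ := by
  have : ‖x‖ ≠ 0 := norm_ne_zero_iff.2 hx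
  simp [reApplyInnerSelf_apply, hTx, real_inner_smul_left, field]

theorem starProjection_span_singleton_apply_self (T : E →L[ℝ] E) (x : E) :
    (ℝ ∙ x).starProjection (T x) = T.rayleighQuotient x • x := by
  rw [Submodule.starProjection_singleton, rayleighQuotient, reApplyInnerSelf_apply,
    real_inner_comm]
  rfl

theorem apply_self_eq_starProjection_orthogonal_add (T : E →L[ℝ] E) (x : E) :
    T x = (ℝ ∙ x)ᗮ.starProjection (T x) + T.rayleighQuotient x • x := by
  rw [← T.starProjection_span_singleton_apply_self, add_comm,
    Submodule.starProjection_add_starProjection_orthogonal]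

end ContinuousLinearMap

theorem HasDerivAt.rayleighQuotient {B : ℝ → E →L[ℝ] E} {B' : E →L[ℝ] E} {t : ℝ}
    (hB : HasDerivAt B B' t) (x : E) :
    HasDerivAt (fun s => (B s).rayleighQuotient x) (B'.rayleighQuotient x) t := by
  simp only [ContinuousLinearMap.rayleighQuotient, ContinuousLinearMap.reApplyInnerSelf_apply]
  simpa using ((hB.clm_apply (hasDerivAt_const t x)).inner ℝ (hasDerivAt_const t x)).div_const
    (‖x‖ ^ 2)

section Riccati

variable {D L : E →L[ℝ] E} {c k : ℝ}

theorem apply_eq_of_riccati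
    (hRic : D + L ∘L L + c • L + k • ContinuousLinearMap.id ℝ E = 0) (x : E) :
    D x = -L (L x) - c • L x - k • x := by
  have := congr($hRic x)
  simp only [add_apply, ContinuousLinearMap.comp_apply, smul_apply,
    ContinuousLinearMap.id_apply, zero_apply] at this
  rw [← sub_eq_zero, ← this]
  abel

theorem apply_eq_smul_of_riccati_of_apply_eq_smul
    (hRic : D + L ∘L L + c • L + k • ContinuousLinearMap.id ℝ E = 0) {x : E} {μ : ℝ}
    (hLx : L x = μ • x) : D x = -(μ ^ 2 + c * μ + k) • x := by
  rw [apply_eq_of_riccati hRic, hLx, map_smul, hLx]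
  module

theorem starProjection_orthogonal_apply_of_riccati
    (hRic : D + L ∘L L + c • L + k • ContinuousLinearMap.id ℝ E = 0) (x : E) :
    (ℝ ∙ x)ᗮ.starProjection (D x) =
      -((ℝ ∙ x)ᗮ.starProjection ∘L L + (L.rayleighQuotient x + c) • ContinuousLinearMap.id ℝ E)
        ((ℝ ∙ x)ᗮ.starProjection (L x)) := by
  set P := (ℝ ∙ x)ᗮ.starProjection
  have hPLL : P (L (L x)) = P (L (P (L x))) + L.rayleighQuotient x • P (L x) := by
    conv_lhs => rw [L.apply_self_eq_starProjection_orthogonal_add x]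
    rw [map_add, map_add, map_smul, map_smul]
  rw [apply_eq_of_riccati hRic, map_sub, map_sub, map_neg, hPLL, map_smul, map_smul,
    Submodule.starProjection_orthogonal_span_singleton_self]
  simp only [add_apply, ContinuousLinearMap.comp_apply, smul_apply,
    ContinuousLinearMap.id_apply]
  module

end Riccati

end InnerProductSpace

theorem stmt_13_general {n : ℕ} (T k : ℝ)
    (g : ℝ → ℝ) (hg : Continuous g)
    (B B' : ℝ → EuclideanSpace ℝ (Fin n) →L[ℝ] EuclideanSpace ℝ (Fin n))
    (hB : ∀ t, HasDerivAt B (B' t) t)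
    (hRic : ∀ t ∈ Set.Icc (0 : ℝ) T,
      B' t + B t ∘L B t + (2 * g t) • B t
        + k • ContinuousLinearMap.id ℝ (EuclideanSpace ℝ (Fin n)) = 0)
    (y₀ : EuclideanSpace ℝ (Fin n)) (hy₀ : y₀ ≠ 0) (lam₀ : ℝ)
    (heig : B 0 y₀ = lam₀ • y₀) :
    ∃ lam lam' : ℝ → ℝ, lam 0 = lam₀ ∧
      (∀ t ∈ Set.Icc (0 : ℝ) T, HasDerivAt lam (lam' t) t) ∧
      (∀ t ∈ Set.Icc (0 : ℝ) T, B t y₀ = lam t • y₀) ∧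
      (∀ t ∈ Set.Icc (0 : ℝ) T, lam' t + lam t ^ 2 + 2 * g t * lam t + k = 0) := by
  set P := (ℝ ∙ y₀)ᗮ.starProjection with hP
  set lam := fun t => (B t).rayleighQuotient y₀ with hlam_def
  have hlam (t : ℝ) : HasDerivAt lam ((B' t).rayleighQuotient y₀) t := (hB t).rayleighQuotient y₀
  have hBc : Continuous B := continuous_iff_continuousAt.2 fun t => (hB t).continuousAt
  have hlamc : Continuous lam := continuous_iff_continuousAt.2 fun t => (hlam t).continuousAt
  have hPB : ∀ t ∈ Icc 0 T, P (B t y₀) = 0 := by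
    refine eqOn_zero_of_hasDerivWithinAt_clm_apply
      (A := fun t => -(P ∘L B t + (lam t + 2 * g t) • ContinuousLinearMap.id ℝ _))
      (by fun_prop) (by fun_prop) (fun t ht => ?_) ?_
    · have hPB' := (hasDerivAt_const t P).clm_apply ((hB t).clm_apply (hasDerivAt_const t y₀))
      refine (hPB'.congr_deriv ?_).hasDerivWithinAt
      simpa [hP, hlam_def] using
        starProjection_orthogonal_apply_of_riccati (hRic t (Ico_subset_Icc_self ht)) y₀
    · rw [heig, map_smul, Submodule.starProjection_orthogonal_span_singleton_self, smul_zero]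
  have hBy : ∀ t ∈ Icc 0 T, B t y₀ = lam t • y₀ := fun t ht => by
    have := (B t).apply_self_eq_starProjection_orthogonal_add y₀
    rwa [← hP, hPB t ht, zero_add] at this
  refine ⟨lam, fun t => (B' t).rayleighQuotient y₀,
    ContinuousLinearMap.rayleighQuotient_eq_of_apply_eq_smul hy₀ heig, fun t _ => hlam t, hBy,
    fun t ht => ?_⟩
  beta_reduce
  rw [ContinuousLinearMap.rayleighQuotient_eq_of_apply_eq_smul hy₀
    (apply_eq_smul_of_riccati_of_apply_eq_smul (hRic t ht) (hBy t ht))]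
  ring

/-- If `B` satisfies the weighted matrix Riccati equation
`B' + B² + 2g·B + k·id = 0` on `[0, T]` and `B(0) y₀ = lam₀ y₀` with `y₀ ≠ 0`, then there is a
differentiable `λ : [0,T] → ℝ` with `λ(0) = lam₀`, `B(t) y₀ = λ(t) y₀` on `[0,T]`, and
`λ' + λ² + 2g·λ + k = 0` on `[0,T]`; in particular eigenvectors of `B(0)` remain
eigenvectors of `B(t)`. -/
theorem stmt_13 {n : ℕ} (T k : ℝ) (hT : 0 < T)
    (g : ℝ → ℝ) (hg : Continuous g)
    (B B' : ℝ → EuclideanSpace ℝ (Fin n) →L[ℝ] EuclideanSpace ℝ (Fin n))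
    (hB : ∀ t, HasDerivAt B (B' t) t)
    (hRic : ∀ t ∈ Set.Icc (0 : ℝ) T,
      B' t + B t ∘L B t + (2 * g t) • B t
        + k • ContinuousLinearMap.id ℝ (EuclideanSpace ℝ (Fin n)) = 0)
    (y₀ : EuclideanSpace ℝ (Fin n)) (hy₀ : y₀ ≠ 0) (lam₀ : ℝ)
    (heig : B 0 y₀ = lam₀ • y₀) :
    ∃ lam lam' : ℝ → ℝ, lam 0 = lam₀ ∧
      (∀ t ∈ Set.Icc (0 : ℝ) T, HasDerivAt lam (lam' t) t) ∧
      (∀ t ∈ Set.Icc (0 : ℝ) T, B t y₀ = lam t • y₀) ∧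
      (∀ t ∈ Set.Icc (0 : ℝ) T, lam' t + lam t ^ 2 + 2 * g t * lam t + k = 0) :=
  stmt_13_general T k g hg B B' hB hRic y₀ hy₀ lam₀ heig
end

section
/- Let k > 0. There is no differentiable function λ : ℝ → ℝ satisfying λ'(t) + λ(t)² + k = 0 for all t ∈ [0, π/√k]. -/
/-!
Along a solution of `λ' = -(λ² + s²)`, the angle `θ = arctan (λ / s)` decreases at the constant
rate `s`. On an interval of length at least `π / s` it would therefore drop by at least `π`,
which is impossible since `arctan` takes values in `(-π/2, π/2)`.
-/

open Real Set

lemma hasDerivAt_arctan_div_of_riccati {lam : ℝ → ℝ} {s t : ℝ} (hs : s ≠ 0)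
    (h : HasDerivAt lam (-(lam t ^ 2 + s ^ 2)) t) :
    HasDerivAt (fun t => arctan (lam t / s)) (-s) t := by
  refine (h.div_const s).arctan.congr_deriv ?_
  have : lam t ^ 2 + s ^ 2 ≠ 0 := by positivity
  field_simp
  ring

lemma sub_eq_mul_of_hasDerivAt_const {f : ℝ → ℝ} {a b c : ℝ} (hab : a < b)
    (hf : ∀ t ∈ Icc a b, HasDerivAt f c t) : f b - f a = c * (b - a) := by
  obtain ⟨t, -, ht⟩ := exists_hasDerivAt_eq_slope f (fun _ => c) hab
    (fun t h => (hf t h).continuousAt.continuousWithinAt) (fun t h => hf t (Ioo_subset_Icc_self h))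
  rw [ht, div_mul_cancel₀ _ (sub_ne_zero.mpr hab.ne')]

lemma arctan_sub_arctan_gt_neg_pi (x y : ℝ) : -π < arctan x - arctan y := by
  linarith [neg_pi_div_two_lt_arctan x, arctan_lt_pi_div_two y]

theorem not_exists_riccati_solution_of_pi_div_le {s a b : ℝ} (hs : 0 < s) (hab : π / s ≤ b - a) :
    ¬ ∃ lam lam' : ℝ → ℝ, (∀ t ∈ Icc a b, HasDerivAt lam (lam' t) t) ∧
      (∀ t ∈ Icc a b, lam' t + lam t ^ 2 + s ^ 2 = 0) := by
  rintro ⟨lam, lam', hderiv, hriccati⟩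
  have hπ : π ≤ s * (b - a) := by rwa [div_le_iff₀' hs] at hab
  have hab' : a < b := by nlinarith [pi_pos]
  have hθ : ∀ t ∈ Icc a b, HasDerivAt (fun t => arctan (lam t / s)) (-s) t := fun t ht =>
    hasDerivAt_arctan_div_of_riccati hs.ne' <| by
      simpa [show lam' t = -(lam t ^ 2 + s ^ 2) by linarith [hriccati t ht]] using hderiv t ht
  have hdrop := sub_eq_mul_of_hasDerivAt_const hab' hθ
  linarith [arctan_sub_arctan_gt_neg_pi (lam b / s) (lam a / s)]

/-- For `k > 0`, there is no differentiable function `λ : ℝ → ℝ` satisfying the scalar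
Riccati equation `λ'(t) + λ(t)² + k = 0` for all `t ∈ [0, π/√k]`. -/
theorem stmt_14 (k : ℝ) (hk : 0 < k) :
    ¬ ∃ lam lam' : ℝ → ℝ,
      (∀ t ∈ Set.Icc (0 : ℝ) (π / Real.sqrt k), HasDerivAt lam (lam' t) t) ∧
      (∀ t ∈ Set.Icc (0 : ℝ) (π / Real.sqrt k), lam' t + lam t ^ 2 + k = 0) := by
  have h := not_exists_riccati_solution_of_pi_div_le (sqrt_pos.mpr hk) (sub_zero (π / √k)).ge
  rwa [sq_sqrt hk.le] at h
end

section
/- Let k > 0 and let g : ℝ → ℝ be a function with g(t)² ≤ c for all t ≥ 0, where c < k is a constant. Then there is no differentiable function λ : ℝ → ℝ satisfying the weighted scalar Riccati equation λ'(t) + λ(t)² + 2g(t)·λ(t) + k = 0 for all t ∈ [0, ∞); that is, every solution blows up in finite time. -/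
/-!
Completing the square, `λ' = -(λ + g)² - (k - g²) ≤ -(k - c)`, so `λ` decreases at least
linearly and eventually drops below `-√c`. From then on `μ = λ + √c` is negative and, since
`g ≤ √c`, satisfies `μ' ≤ -μ²`; hence `1/μ - t` is nondecreasing, which forces `1/μ` to reach
`0` within time `-1/μ(t₀)`, contradicting `μ < 0`.
-/

open Set

theorem Convex.antitoneOn_of_hasDerivAt_nonpos {D : Set ℝ} (hD : Convex ℝ D) {f f' : ℝ → ℝ}
    (hf : ∀ x ∈ D, HasDerivAt f (f' x) x) (hf'₀ : ∀ x ∈ D, f' x ≤ 0) : AntitoneOn f D :=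
  antitoneOn_of_hasDerivWithinAt_nonpos hD
    (fun x hx ↦ (hf x hx).continuousAt.continuousWithinAt)
    (fun x hx ↦ (hf x (interior_subset hx)).hasDerivWithinAt)
    (fun x hx ↦ hf'₀ x (interior_subset hx))

theorem Convex.monotoneOn_of_hasDerivAt_nonneg {D : Set ℝ} (hD : Convex ℝ D) {f f' : ℝ → ℝ}
    (hf : ∀ x ∈ D, HasDerivAt f (f' x) x) (hf'₀ : ∀ x ∈ D, 0 ≤ f' x) : MonotoneOn f D :=
  monotoneOn_of_hasDerivWithinAt_nonneg hD
    (fun x hx ↦ (hf x hx).continuousAt.continuousWithinAt)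
    (fun x hx ↦ (hf x (interior_subset hx)).hasDerivWithinAt)
    (fun x hx ↦ hf'₀ x (interior_subset hx))

theorem exists_lt_of_hasDerivAt_le_neg {f f' : ℝ → ℝ} {a ε : ℝ} (hε : 0 < ε)
    (hf : ∀ t ∈ Ici a, HasDerivAt f (f' t) t) (hf' : ∀ t ∈ Ici a, f' t ≤ -ε) (M : ℝ) :
    ∃ t ∈ Ici a, f t < M := by
  have hanti : AntitoneOn (fun t ↦ f t + ε * t) (Ici a) :=
    (convex_Ici a).antitoneOn_of_hasDerivAt_nonpos
      (fun t ht ↦ (hf t ht).add ((hasDerivAt_id t).const_mul ε))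
      (fun t ht ↦ by linarith [hf' t ht])
  set T := (|f a - M| + 1) / ε
  have hT : ε * T = |f a - M| + 1 := mul_div_cancel₀ _ hε.ne'
  have hT0 : 0 ≤ T := by positivity
  refine ⟨a + T, by simpa using hT0, ?_⟩
  have := hanti self_mem_Ici (by simpa using hT0) (le_add_of_nonneg_right hT0)
  simp only at this
  linarith [le_abs_self (f a - M)]

theorem false_of_hasDerivAt_le_neg_sq {μ μ' : ℝ → ℝ} {a : ℝ} (hμa : μ a < 0)
    (hμ : ∀ t ∈ Ici a, HasDerivAt μ (μ' t) t) (hle : ∀ t ∈ Ici a, μ' t ≤ -μ t ^ 2) : False := by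
  have hneg : ∀ t ∈ Ici a, μ t < 0 := fun t ht ↦
    ((convex_Ici a).antitoneOn_of_hasDerivAt_nonpos hμ
      (fun t ht ↦ (hle t ht).trans (neg_nonpos.2 (sq_nonneg _))) self_mem_Ici ht ht).trans_lt hμa
  have hmono : MonotoneOn (fun t ↦ (μ t)⁻¹ - t) (Ici a) := by
    refine (convex_Ici a).monotoneOn_of_hasDerivAt_nonneg
      (fun t ht ↦ ((hμ t ht).inv (hneg t ht).ne).sub (hasDerivAt_id t)) fun t ht ↦ ?_
    have hsq : 0 < μ t ^ 2 := sq_pos_of_neg (hneg t ht)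
    rw [sub_nonneg, neg_div, le_neg, div_le_iff₀ hsq]
    linarith [hle t ht]
  set b := a - (μ a)⁻¹
  have hab : a ≤ b := (le_sub_self_iff a).2 (inv_nonpos.2 hμa.le)
  have := hmono self_mem_Ici hab hab
  simp only [b] at this
  linarith [inv_lt_zero.2 (hneg b hab)]

theorem riccati_deriv_le_neg {l l' g c k : ℝ} (hg : g ^ 2 ≤ c)
    (h : l' + l ^ 2 + 2 * g * l + k = 0) : l' ≤ -(k - c) := by
  nlinarith [sq_nonneg (l + g)]

theorem riccati_deriv_le_neg_sq {l l' g s k : ℝ} (hg : g ≤ s) (hl : l ≤ 0) (hk : s ^ 2 ≤ k)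
    (h : l' + l ^ 2 + 2 * g * l + k = 0) : l' ≤ -(l + s) ^ 2 := by
  nlinarith [mul_nonneg_of_nonpos_of_nonpos hl (sub_nonpos.2 hg)]

theorem stmt_15_general (k c : ℝ) (hc : c < k)
    (g : ℝ → ℝ) (hg : ∀ t : ℝ, 0 ≤ t → g t ^ 2 ≤ c) :
    ¬ ∃ lam lam' : ℝ → ℝ,
      (∀ t ∈ Set.Ici (0 : ℝ), HasDerivAt lam (lam' t) t) ∧
      (∀ t ∈ Set.Ici (0 : ℝ), lam' t + lam t ^ 2 + 2 * g t * lam t + k = 0) := by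
  rintro ⟨lam, lam', hd, he⟩
  have hc0 : 0 ≤ c := (sq_nonneg _).trans (hg 0 le_rfl)
  have hdecr : ∀ t ∈ Ici (0 : ℝ), lam' t ≤ -(k - c) := fun t ht ↦
    riccati_deriv_le_neg (hg t ht) (he t ht)
  have hanti : AntitoneOn lam (Ici 0) := (convex_Ici 0).antitoneOn_of_hasDerivAt_nonpos hd
    fun t ht ↦ (hdecr t ht).trans (by linarith)
  obtain ⟨t₀, ht₀, hlt⟩ := exists_lt_of_hasDerivAt_le_neg (sub_pos.2 hc) hd hdecr (-√c)
  have hbelow : ∀ t ∈ Ici t₀, lam t < -√c := fun t ht ↦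
    (hanti ht₀ (mem_Ici.2 (le_trans ht₀ ht)) ht).trans_lt hlt
  refine false_of_hasDerivAt_le_neg_sq (μ := fun t ↦ lam t + √c) (a := t₀)
    (by linarith) (fun t ht ↦ (hd t (mem_Ici.2 (le_trans ht₀ ht))).add_const _) fun t ht ↦ ?_
  have ht0 : 0 ≤ t := le_trans ht₀ ht
  refine riccati_deriv_le_neg_sq ((le_abs_self _).trans (Real.abs_le_sqrt (hg t ht0))) ?_
    (by rw [Real.sq_sqrt hc0]; exact hc.le) (he t ht0)
  linarith [hbelow t ht, Real.sqrt_nonneg c]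

/-- For `k > 0` and `g : ℝ → ℝ` with `g(t)² ≤ c < k` for all `t ≥ 0`, there is no
differentiable `λ : ℝ → ℝ` satisfying the weighted scalar Riccati equation
`λ'(t) + λ(t)² + 2g(t)λ(t) + k = 0` on `[0, ∞)`: every solution blows up in finite time. -/
theorem stmt_15 (k c : ℝ) (hk : 0 < k) (hc : c < k)
    (g : ℝ → ℝ) (hg : ∀ t : ℝ, 0 ≤ t → g t ^ 2 ≤ c) :
    ¬ ∃ lam lam' : ℝ → ℝ,
      (∀ t ∈ Set.Ici (0 : ℝ), HasDerivAt lam (lam' t) t) ∧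
      (∀ t ∈ Set.Ici (0 : ℝ), lam' t + lam t ^ 2 + 2 * g t * lam t + k = 0) :=
  stmt_15_general k c hc g hg
end

section
/- Let k > 0 and let B : ℝ → (ℝⁿ →L[ℝ] ℝⁿ) be differentiable and satisfy the matrix Riccati equation B'(t) + B(t)² + k·id = 0 for all t ∈ [0, π/√k]. Then B(0) has no real eigenvalue; in particular, if n is odd, then no such B exists. -/
/-!
If `B 0 y = μ y` with `y ≠ 0`, put `f t = √k cos (√k t) + μ sin (√k t)`, so `f'' = -k f`. Along a
solution of the Riccati equation the defect `R = f' y - f B y` obeys the linear equation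
`R' = -B R` and vanishes at `0`, hence vanishes on `[0, π/√k]`. But `f` has a zero `t₁` there
(`f 0 = √k`, `f (π/√k) = -√k`), and then `f' t₁ y = 0` with `f' t₁ ≠ 0`, forcing `y = 0`.
In odd dimension the characteristic polynomial of `B 0` has odd degree, hence a real root.
-/

open Real Set Filter Polynomial

theorem Polynomial.exists_isRoot_of_odd_natDegree_real {P : ℝ[X]} (hP : Odd P.natDegree) :
    ∃ x, P.IsRoot x := by
  wlog hlc : 0 < P.leadingCoeff generalizing P
  · have hne : P.leadingCoeff ≠ 0 := leadingCoeff_ne_zero.mpr (by rintro rfl; simp at hP)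
    obtain ⟨x, hx⟩ := this (P := -P) (by rwa [natDegree_neg])
      (by rw [leadingCoeff_neg]; exact neg_pos.mpr (lt_of_le_of_ne (not_lt.mp hlc) hne))
    exact ⟨x, by simpa using hx⟩
  have hdeg : 0 < P.degree := natDegree_pos_iff_degree_pos.mp hP.pos
  have hpow : Tendsto (fun x : ℝ => P.leadingCoeff * x ^ P.natDegree) atBot atBot := by
    have : Tendsto (fun x : ℝ => -(P.leadingCoeff * (-x) ^ P.natDegree)) atBot atBot :=
      tendsto_neg_atTop_atBot.comp <| (tendsto_pow_atTop hP.pos.ne').const_mul_atTop hlc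
        |>.comp tendsto_neg_atBot_atTop
    simpa [hP.neg_pow] using this
  obtain ⟨x, hx⟩ := P.continuous.surjective (P.tendsto_atTop_of_leadingCoeff_nonneg hdeg hlc.le)
    ((P.isEquivalent_atBot_lead).symm.tendsto_atBot hpow) 0
  exact ⟨x, hx⟩

theorem Module.End.exists_hasEigenvalue_of_odd_finrank {V : Type*} [AddCommGroup V] [Module ℝ V]
    [FiniteDimensional ℝ V] (f : End ℝ V) (h : Odd (Module.finrank ℝ V)) :
    ∃ μ, f.HasEigenvalue μ := by
  obtain ⟨μ, hμ⟩ := Polynomial.exists_isRoot_of_odd_natDegree_real (P := f.charpoly)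
    (by rwa [f.charpoly_natDegree])
  exact ⟨μ, (f.hasEigenvalue_iff_isRoot_charpoly μ).mpr hμ⟩

theorem hasDerivAt_mul_cos_add_mul_sin (a b s t : ℝ) :
    HasDerivAt (fun t => a * cos (s * t) + b * sin (s * t))
      (s * (b * cos (s * t) - a * sin (s * t))) t := by
  have hst : HasDerivAt (fun t => s * t) s t := by simpa using (hasDerivAt_id t).const_mul s
  exact ((((hasDerivAt_cos _).comp t hst).const_mul a).add
    (((hasDerivAt_sin _).comp t hst).const_mul b)).congr_deriv (by ring)

section LinearODE

variable {E : Type*} [NormedAddCommGroup E] [NormedSpace ℝ E]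

theorem eqOn_zero_of_hasDerivAt_clm_apply {A : ℝ → E →L[ℝ] E} {u : ℝ → E} {a b : ℝ}
    (hA : ContinuousOn A (Icc a b)) (hu : ∀ t ∈ Icc a b, HasDerivAt u (A t (u t)) t)
    (ha : u a = 0) : EqOn u 0 (Icc a b) := by
  obtain ⟨C, hC⟩ := isCompact_Icc.exists_bound_of_continuousOn hA
  have hlip : ∀ t ∈ Ico a b, LipschitzOnWith C.toNNReal (A t) univ := fun t ht =>
    ((A t).lipschitz.weaken (by
      rw [← NNReal.coe_le_coe, coe_nnnorm, Real.coe_toNNReal']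
      exact (hC t (Ico_subset_Icc_self ht)).trans (le_max_left _ _))).lipschitzOnWith
  exact ODE_solution_unique_of_mem_Icc_right hlip
    (fun t ht => (hu t ht).continuousAt.continuousWithinAt)
    (fun t ht => (hu t (Ico_subset_Icc_self ht)).hasDerivWithinAt) (fun _ _ => trivial)
    continuousOn_const
    (fun t _ => by rw [Pi.zero_apply, map_zero]; exact hasDerivWithinAt_const t (Ici t) 0)
    (fun _ _ => trivial) ha

end LinearODE

section Riccati

variable {E : Type*} [NormedAddCommGroup E] [NormedSpace ℝ E] {B B' : ℝ → E →L[ℝ] E} {k : ℝ}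
  {f f' : ℝ → ℝ}

theorem hasDerivAt_riccati_residual {t : ℝ} (y : E) (hB : HasDerivAt B (B' t) t)
    (hRic : B' t + B t ∘L B t + k • ContinuousLinearMap.id ℝ E = 0)
    (hf : HasDerivAt f (f' t) t) (hf' : HasDerivAt f' (-(k * f t)) t) :
    HasDerivAt (fun t => f' t • y - f t • B t y) (-B t (f' t • y - f t • B t y)) t := by
  have hRic_y : B' t y + B t (B t y) + k • y = 0 := by simpa using congr($hRic y)
  have hBy : HasDerivAt (fun t => B t y) (B' t y) t := by
    simpa using hB.clm_apply (hasDerivAt_const t y)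
  exact ((hf'.smul_const y).sub (hf.smul hBy)).congr_deriv (by
    simp only [map_sub, map_smul]
    linear_combination (norm := module) (-f t) • hRic_y)

theorem riccati_smul_eq_of_smul_eq {a b : ℝ} (y : E) (hB : ∀ t ∈ Icc a b, HasDerivAt B (B' t) t)
    (hRic : ∀ t ∈ Icc a b, B' t + B t ∘L B t + k • ContinuousLinearMap.id ℝ E = 0)
    (hf : ∀ t, HasDerivAt f (f' t) t) (hf' : ∀ t, HasDerivAt f' (-(k * f t)) t)
    (ha : f' a • y = f a • B a y) : ∀ t ∈ Icc a b, f' t • y = f t • B t y := by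
  have hR := eqOn_zero_of_hasDerivAt_clm_apply (A := fun t => -B t)
    (fun t ht => (hB t ht).continuousAt.continuousWithinAt.neg)
    (fun t ht => hasDerivAt_riccati_residual y (hB t ht) (hRic t ht) (hf t) (hf' t))
    (sub_eq_zero.mpr ha)
  exact fun t ht => sub_eq_zero.mp (hR ht)

theorem eq_zero_of_riccati_of_apply_eq_smul (hk : 0 < k) (hB : ∀ t, HasDerivAt B (B' t) t)
    (hRic : ∀ t ∈ Icc 0 (π / √k), B' t + B t ∘L B t + k • ContinuousLinearMap.id ℝ E = 0)
    {μ : ℝ} {y : E} (hy : B 0 y = μ • y) : y = 0 := by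
  set s := √k
  have hs : 0 < s := sqrt_pos.mpr hk
  have hsk : s * s = k := mul_self_sqrt hk.le
  set f := fun t => s * cos (s * t) + μ * sin (s * t)
  set f' := fun t => (μ * s) * cos (s * t) + (-k) * sin (s * t)
  have hf t : HasDerivAt f (f' t) t := (hasDerivAt_mul_cos_add_mul_sin _ _ _ t).congr_deriv
    (by simp only [f']; linear_combination (-sin (s * t)) * hsk)
  have hf' t : HasDerivAt f' (-(k * f t)) t := (hasDerivAt_mul_cos_add_mul_sin _ _ _ t).congr_deriv
    (by simp only [f]; linear_combination (-μ * sin (s * t)) * hsk)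
  have hR := riccati_smul_eq_of_smul_eq y (fun t _ => hB t) hRic hf hf'
    (by simp [f, f', hy, smul_smul, mul_comm])
  obtain ⟨t₁, ht₁, hft₁⟩ : ∃ t₁ ∈ Icc 0 (π / s), f t₁ = 0 := by
    have hfc : Continuous f := by fun_prop
    have hπ : s * (π / s) = π := by field_simp
    exact intermediate_value_Icc' (div_pos pi_pos hs).le hfc.continuousOn
      ⟨by simp [f, hπ, hs.le], by simp [f, hs.le]⟩
  -- `k f² + f'² = k (k + μ²)` is conserved, so `f'` cannot vanish where `f` does.
  have hf't₁ : f' t₁ ≠ 0 := by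
    intro h
    have : k * (k + μ ^ 2) = 0 := by
      simp only [f, f'] at hft₁ h
      linear_combination (k * f t₁) * hft₁ + f' t₁ * h
        - k * (k + μ ^ 2) * sin_sq_add_cos_sq (s * t₁) - cos (s * t₁) ^ 2 * (k + μ ^ 2) * hsk
    nlinarith [sq_nonneg μ]
  simpa [hft₁, hf't₁] using hR t₁ ht₁

end Riccati

/-- If `B` satisfies the matrix Riccati equation `B' + B² + k·id = 0` with `k > 0` on
`[0, π/√k]`, then `B(0)` has no real eigenvalue; in particular, if `n` is odd, no such `B`
exists. -/
theorem stmt_16 {n : ℕ} (k : ℝ) (hk : 0 < k)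
    (B B' : ℝ → EuclideanSpace ℝ (Fin n) →L[ℝ] EuclideanSpace ℝ (Fin n))
    (hB : ∀ t, HasDerivAt B (B' t) t)
    (hRic : ∀ t ∈ Set.Icc (0 : ℝ) (π / Real.sqrt k),
      B' t + B t ∘L B t + k • ContinuousLinearMap.id ℝ (EuclideanSpace ℝ (Fin n)) = 0) :
    (¬ ∃ (lam₀ : ℝ) (y₀ : EuclideanSpace ℝ (Fin n)), y₀ ≠ 0 ∧ B 0 y₀ = lam₀ • y₀) ∧
    (Odd n → False) := by
  have eigenvector_eq_zero {μ : ℝ} {y : EuclideanSpace ℝ (Fin n)} (hy : B 0 y = μ • y) : y = 0 :=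
    eq_zero_of_riccati_of_apply_eq_smul hk hB hRic hy
  refine ⟨fun ⟨_, _, hy₀, hy⟩ => hy₀ (eigenvector_eq_zero hy), fun hodd => ?_⟩
  obtain ⟨μ, hμ⟩ := Module.End.exists_hasEigenvalue_of_odd_finrank (B 0 : Module.End ℝ _)
    (by rwa [finrank_euclideanSpace_fin])
  obtain ⟨y, hy⟩ := hμ.exists_hasEigenvector
  exact hy.2 (eigenvector_eq_zero hy.apply_eq_smul)
end
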